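/- Define the diamond norm of a bipartite operator Q on ℂ^n ⊗ ℂ^n as ‖Q‖_⋄ = inf over all decompositions Q = ∑_t A_t ⊗ B_t† of sqrt(‖∑_t A_t† A_t‖) · sqrt(‖∑_t B_t† B_t‖). Then the diamond norm is a tensor norm: if Q = A ⊗ B then ‖Q‖_⋄ = ‖A‖ · ‖B‖. -/

import Mathlib

/-!
The single-term decomposition `A ⊗ (Bᴴ)ᴴ` shows `‖A ⊗ B‖_⋄ ≤ ‖A‖‖B‖`. Conversely, every
decomposition factors as `∑ₜ Aₜ ⊗ Bₜᴴ = Rᴴ C`, where `C` stacks the blocks `Aₜ ⊗ 1` and `R` the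
blocks `1 ⊗ Bₜ`. Then `‖Rᴴ C‖ ≤ ‖R‖‖C‖` and `‖C‖² = ‖(∑ₜ Aₜᴴ Aₜ) ⊗ 1‖ ≤ ‖∑ₜ Aₜᴴ Aₜ‖`, because
`X ↦ X ⊗ 1` is a ⋆-homomorphism of C⋆-algebras and hence contractive; similarly for `R`. Finally
`‖A‖‖B‖ ≤ ‖A ⊗ B‖`, by evaluating `A ⊗ B` on product vectors `x ⊗ y`.
-/

open scoped Kronecker Matrix Matrix.Norms.L2Operator

/-- The diamond norm of a bipartite operator `Q` on `ℂ^{nA} ⊗ ℂ^{nB}`: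
the infimum over finite decompositions `Q = ∑_t A_t ⊗ B_tᴴ` of
`√‖∑_t A_tᴴ A_t‖ · √‖∑_t B_tᴴ B_t‖` (operator norms). -/
noncomputable def diamondNorm {nA nB : ℕ}
    (Q : Matrix (Fin nA × Fin nB) (Fin nA × Fin nB) ℂ) : ℝ :=
  sInf { r : ℝ | ∃ (T : ℕ) (A : Fin T → Matrix (Fin nA) (Fin nA) ℂ)
      (B : Fin T → Matrix (Fin nB) (Fin nB) ℂ),
      Q = ∑ t, (A t) ⊗ₖ (B t)ᴴ ∧
      r = Real.sqrt ‖∑ t, (A t)ᴴ * A t‖ * Real.sqrt ‖∑ t, (B t)ᴴ * B t‖ }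

open Matrix

namespace ContinuousLinearMap

variable {𝕜 E F E' F' : Type*} [DenselyNormedField 𝕜]
  [NormedAddCommGroup E] [NormedSpace 𝕜 E] [SeminormedAddCommGroup F] [NormedSpace 𝕜 F]
  [NormedAddCommGroup E'] [NormedSpace 𝕜 E'] [SeminormedAddCommGroup F'] [NormedSpace 𝕜 F']

theorem opNorm_mul_opNorm_le_bound (f : E →L[𝕜] F) (g : E' →L[𝕜] F') {c : ℝ} (hc : 0 ≤ c)
    (h : ∀ x y, ‖f x‖ * ‖g y‖ ≤ c * (‖x‖ * ‖y‖)) : ‖f‖ * ‖g‖ ≤ c := by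
  refine mul_le_of_forall_lt_of_nonneg (norm_nonneg f) hc fun a _ ha b hb hb' => ?_
  obtain ⟨x, hx, hax⟩ := f.exists_lt_apply_of_lt_opNorm ha
  obtain ⟨y, hy, hby⟩ := g.exists_lt_apply_of_lt_opNorm hb'
  calc a * b ≤ ‖f x‖ * ‖g y‖ := mul_le_mul hax.le hby.le hb (norm_nonneg _)
    _ ≤ c * (‖x‖ * ‖y‖) := h x y
    _ ≤ c := mul_le_of_le_one_right hc (mul_le_one₀ hx.le (norm_nonneg y) hy.le)

end ContinuousLinearMap

theorem NonUnitalStarAlgHom.norm_sum_star_mul_self_map_le {A B ι : Type*}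
    [NonUnitalCStarAlgebra A] [NonUnitalCStarAlgebra B] [Fintype ι]
    (φ : A →⋆ₙₐ[ℂ] B) (a : ι → A) :
    ‖∑ i, star (φ (a i)) * φ (a i)‖ ≤ ‖∑ i, star (a i) * a i‖ := by
  simpa only [map_sum, map_mul, map_star] using norm_apply_le φ (∑ i, star (a i) * a i)

namespace EuclideanSpace

variable {𝕜 ι κ : Type*} [RCLike 𝕜] [Fintype ι] [Fintype κ]

def kronecker (x : EuclideanSpace 𝕜 ι) (y : EuclideanSpace 𝕜 κ) : EuclideanSpace 𝕜 (ι × κ) :=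
  WithLp.toLp 2 fun p => x p.1 * y p.2

theorem norm_kronecker (x : EuclideanSpace 𝕜 ι) (y : EuclideanSpace 𝕜 κ) :
    ‖kronecker x y‖ = ‖x‖ * ‖y‖ := by
  simp only [EuclideanSpace.norm_eq]
  rw [← Real.sqrt_mul (by positivity), Finset.sum_mul_sum, ← Fintype.sum_prod_type']
  simp only [kronecker, norm_mul, mul_pow]

theorem toEuclideanCLM_kronecker_apply_kronecker [DecidableEq ι] [DecidableEq κ]
    (A : Matrix ι ι 𝕜) (B : Matrix κ κ 𝕜) (x : EuclideanSpace 𝕜 ι) (y : EuclideanSpace 𝕜 κ) :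
    toEuclideanCLM (𝕜 := 𝕜) (A ⊗ₖ B) (kronecker x y)
      = kronecker (toEuclideanCLM (𝕜 := 𝕜) A x) (toEuclideanCLM (𝕜 := 𝕜) B y) := by
  ext p
  simp only [kronecker, ofLp_toEuclideanCLM, mulVec, dotProduct, kroneckerMap_apply,
    Fintype.sum_prod_type, Finset.sum_mul_sum]
  refine Finset.sum_congr rfl fun i _ => Finset.sum_congr rfl fun k _ => ?_
  ring

end EuclideanSpace

namespace Matrix

section Stack

variable {α ι m n : Type*}

def stack (M : ι → Matrix m n α) : Matrix (ι × m) n α :=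
  of fun p j => M p.1 p.2 j

theorem conjTranspose_stack_mul_stack [NonUnitalSemiring α] [StarRing α] [Fintype ι] [Fintype m]
    (M N : ι → Matrix m n α) :
    (stack M)ᴴ * stack N = ∑ i, (M i)ᴴ * N i := by
  ext j k
  simp [stack, mul_apply, Matrix.sum_apply, Fintype.sum_prod_type]

end Stack

section L2OpNorm

variable {𝕜 ι κ m n : Type*} [RCLike 𝕜] [Fintype m] [Fintype n] [DecidableEq n]

theorem sqrt_l2_opNorm_conjTranspose_mul_self (A : Matrix m n 𝕜) : √‖Aᴴ * A‖ = ‖A‖ := by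
  rw [l2_opNorm_conjTranspose_mul_self, Real.sqrt_mul_self (norm_nonneg A)]

theorem l2_opNorm_stack [Fintype ι] (M : ι → Matrix m n 𝕜) :
    ‖stack M‖ = √‖∑ i, (M i)ᴴ * M i‖ := by
  rw [← conjTranspose_stack_mul_stack, sqrt_l2_opNorm_conjTranspose_mul_self]

theorem l2_opNorm_sum_conjTranspose_mul_le [Fintype ι] (M N : ι → Matrix m n 𝕜) :
    ‖∑ i, (M i)ᴴ * N i‖ ≤ √‖∑ i, (M i)ᴴ * M i‖ * √‖∑ i, (N i)ᴴ * N i‖ := by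
  classical
  rw [← conjTranspose_stack_mul_stack, ← l2_opNorm_stack, ← l2_opNorm_stack,
    ← l2_opNorm_conjTranspose (stack M)]
  exact l2_opNorm_mul _ _

theorem l2_opNorm_mul_l2_opNorm_le_kronecker [Fintype ι] [DecidableEq ι] [Fintype κ]
    [DecidableEq κ] (A : Matrix ι ι 𝕜) (B : Matrix κ κ 𝕜) : ‖A‖ * ‖B‖ ≤ ‖A ⊗ₖ B‖ := by
  simp only [cstar_norm_def]
  refine ContinuousLinearMap.opNorm_mul_opNorm_le_bound _ _ (norm_nonneg _) fun x y => ?_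
  rw [← EuclideanSpace.norm_kronecker, ← EuclideanSpace.norm_kronecker,
    ← EuclideanSpace.toEuclideanCLM_kronecker_apply_kronecker]
  exact ContinuousLinearMap.le_opNorm _ _

end L2OpNorm

section KroneckerOne

variable {R m n : Type*} [CommSemiring R] [StarRing R] [Fintype m] [DecidableEq m]
  [Fintype n] [DecidableEq n]

variable (R m n) in
def kroneckerOneStarAlgHom : Matrix m m R →⋆ₙₐ[R] Matrix (m × n) (m × n) R where
  toFun X := X ⊗ₖ 1
  map_smul' c X := smul_kronecker c X 1
  map_zero' := zero_kronecker 1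
  map_add' X Y := add_kronecker X Y 1
  map_mul' X Y := by rw [← mul_kronecker_mul, one_mul]
  map_star' X := by simp [star_eq_conjTranspose, conjTranspose_kronecker]

variable (R m n) in
def oneKroneckerStarAlgHom : Matrix n n R →⋆ₙₐ[R] Matrix (m × n) (m × n) R where
  toFun X := 1 ⊗ₖ X
  map_smul' c X := kronecker_smul c 1 X
  map_zero' := kronecker_zero 1
  map_add' X Y := kronecker_add 1 X Y
  map_mul' X Y := by rw [← mul_kronecker_mul, one_mul]
  map_star' X := by simp [star_eq_conjTranspose, conjTranspose_kronecker]

end KroneckerOne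

theorem l2_opNorm_sum_kronecker_conjTranspose_le {m n τ : Type*} [Fintype m] [DecidableEq m]
    [Fintype n] [DecidableEq n] [Fintype τ] (A : τ → Matrix m m ℂ) (B : τ → Matrix n n ℂ) :
    ‖∑ t, A t ⊗ₖ (B t)ᴴ‖ ≤ √‖∑ t, (A t)ᴴ * A t‖ * √‖∑ t, (B t)ᴴ * B t‖ := by
  have factor (t : τ) : A t ⊗ₖ (B t)ᴴ = (1 ⊗ₖ B t)ᴴ * (A t ⊗ₖ 1) := by
    rw [conjTranspose_kronecker, conjTranspose_one, ← mul_kronecker_mul, one_mul, mul_one]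
  have hA : ‖∑ t, (A t ⊗ₖ 1)ᴴ * (A t ⊗ₖ (1 : Matrix n n ℂ))‖ ≤ ‖∑ t, (A t)ᴴ * A t‖ :=
    (kroneckerOneStarAlgHom ℂ m n).norm_sum_star_mul_self_map_le A
  have hB : ‖∑ t, (1 ⊗ₖ B t)ᴴ * ((1 : Matrix m m ℂ) ⊗ₖ B t)‖ ≤ ‖∑ t, (B t)ᴴ * B t‖ :=
    (oneKroneckerStarAlgHom ℂ m n).norm_sum_star_mul_self_map_le B
  calc ‖∑ t, A t ⊗ₖ (B t)ᴴ‖ = ‖∑ t, (1 ⊗ₖ B t)ᴴ * (A t ⊗ₖ 1)‖ := by simp only [factor]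
    _ ≤ √‖∑ t, (1 ⊗ₖ B t)ᴴ * ((1 : Matrix m m ℂ) ⊗ₖ B t)‖
          * √‖∑ t, (A t ⊗ₖ 1)ᴴ * (A t ⊗ₖ (1 : Matrix n n ℂ))‖ :=
        l2_opNorm_sum_conjTranspose_mul_le _ _
    _ ≤ √‖∑ t, (B t)ᴴ * B t‖ * √‖∑ t, (A t)ᴴ * A t‖ := by gcongr
    _ = √‖∑ t, (A t)ᴴ * A t‖ * √‖∑ t, (B t)ᴴ * B t‖ := mul_comm _ _

end Matrix

/-- The diamond norm is a tensor norm: `‖A ⊗ B‖_⋄ = ‖A‖·‖B‖`. -/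
theorem diamondNorm_kronecker {nA nB : ℕ}
    (A : Matrix (Fin nA) (Fin nA) ℂ) (B : Matrix (Fin nB) (Fin nB) ℂ) :
    diamondNorm (A ⊗ₖ B) = ‖A‖ * ‖B‖ := by
  refine IsLeast.csInf_eq ⟨⟨1, fun _ => A, fun _ => Bᴴ, ?_, ?_⟩, ?_⟩
  · rw [Fin.sum_univ_one, conjTranspose_conjTranspose]
  · rw [Fin.sum_univ_one, Fin.sum_univ_one, sqrt_l2_opNorm_conjTranspose_mul_self,
      sqrt_l2_opNorm_conjTranspose_mul_self, l2_opNorm_conjTranspose]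
  · rintro r ⟨T, A', B', hAB, rfl⟩
    calc ‖A‖ * ‖B‖ ≤ ‖A ⊗ₖ B‖ := l2_opNorm_mul_l2_opNorm_le_kronecker A B
      _ ≤ _ := hAB ▸ l2_opNorm_sum_kronecker_conjTranspose_le A' B'
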